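/- arXiv:1201.5168 — 2 statements merged into one kernel-verified Lean document; each statement's English description precedes it below -/
import Mathlib

section
/- Let a, b ∈ (0,1) with a + b = 1, and define φ(n,a) := (log n)^a / 2 and ψ(n,b) := (log n)^b / log log n. Then every rooted binary tree with n > 2 leaves contains a path of length (number of edges) at least (log n)^{ψ(n,b)} or has a restriction that is a balanced rooted binary tree of height at least φ(n,a). -/
/-!
# Rooted binary phylogenetic trees

`RTree L` is the type of rooted binary trees with leaves labelled by elements of `L`:
every internal vertex has exactly two children (a left child and a right child), and
a tree with one leaf is a single vertex.
-/

inductive RTree (L : Type) : Type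
  | leaf : L → RTree L
  | node : RTree L → RTree L → RTree L

namespace RTree

variable {L : Type}

/-- The list of leaf labels of a rooted binary tree, read from left to right. -/
def leafList : RTree L → List L
  | leaf b => [b]
  | node l r => leafList l ++ leafList r

/-- The number of leaves of a rooted binary tree. -/
def numLeaves (T : RTree L) : ℕ := T.leafList.length

/-- The set of leaf labels of a rooted binary tree. -/
def leafSet (T : RTree L) : Set L := {b | b ∈ T.leafList}

/-- The height of a rooted binary tree: the maximum distance from the root to a leaf. -/
def height : RTree L → ℕ
  | leaf _ => 0
  | node l r => max (height l) (height r) + 1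

/-- A rooted binary tree is balanced if all of its leaves are at the same distance
from the root. -/
def IsBalanced : RTree L → Prop
  | leaf _ => True
  | node l r => IsBalanced l ∧ IsBalanced r ∧ height l = height r

/-- A rooted binary tree is phylogenetic if its leaves are labelled bijectively by a
finite set, i.e. all leaf labels are distinct. -/
def IsPhylo (T : RTree L) : Prop := T.leafList.Nodup

/-- `Embeds S T` is the subtree relation `S ⪯ T`: there is an injective map `f` from the
vertices of `S` to the vertices of `T` such that `f x = x` for every leaf `x` of `S`
(leaves being identified across trees by their labels) and
`f (x ∧ y) = f x ∧ f y` for all vertices `x`, `y` of `S`, where `∧` denotes the most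
recent common ancestor.  Equivalently (for trees with distinct leaf labels), `S` is the
restriction of `T` to the leaf set of `S`, up to rooted isomorphism; this structural
characterization is taken as the definition. -/
inductive Embeds : RTree L → RTree L → Prop
  | leaf (b : L) : Embeds (RTree.leaf b) (RTree.leaf b)
  | left {S l r : RTree L} : Embeds S l → Embeds S (RTree.node l r)
  | right {S l r : RTree L} : Embeds S r → Embeds S (RTree.node l r)
  | pair {s₁ s₂ l r : RTree L} :
      Embeds s₁ l → Embeds s₂ r → Embeds (RTree.node s₁ s₂) (RTree.node l r)
  | pair_swap {s₁ s₂ l r : RTree L} :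
      Embeds s₁ r → Embeds s₂ l → Embeds (RTree.node s₁ s₂) (RTree.node l r)

/-- `mast T₁ T₂` is the maximum cardinality of a subset `X ⊆ L(T₁) ∩ L(T₂)` such that
the restrictions `T₁|X` and `T₂|X` are isomorphic; equivalently, the maximum number of
leaves of a rooted binary phylogenetic tree `S` with `S ⪯ T₁` and `S ⪯ T₂`. -/
noncomputable def mast (T₁ T₂ : RTree L) : ℕ :=
  sSup {n | ∃ S : RTree L, S.IsPhylo ∧ Embeds S T₁ ∧ Embeds S T₂ ∧ S.numLeaves = n}

end RTree

namespace RTree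

/-- The maximum length (number of edges) of a path contained in a rooted binary tree. -/
def rdiam {L : Type} : RTree L → ℕ
  | RTree.leaf _ => 0
  | RTree.node l r => max (max (rdiam l) (rdiam r)) (l.height + r.height + 2)

-- Auxiliary lemmas

lemma numLeaves_node {L : Type} (l r : RTree L) :
    (RTree.node l r).numLeaves = l.numLeaves + r.numLeaves := by
  simp [numLeaves, leafList]

lemma one_le_numLeaves {L : Type} (T : RTree L) : 1 ≤ T.numLeaves := by
  induction T with
  | leaf b => simp [numLeaves, leafList]
  | node l r ihl ihr => rw [numLeaves_node]; omega

lemma numLeaves_le_two_pow_height {L : Type} (T : RTree L) :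
    T.numLeaves ≤ 2 ^ T.height := by
  induction T with
  | leaf b => simp [numLeaves, leafList, height]
  | node l r ihl ihr =>
      rw [numLeaves_node]
      have h1 : l.numLeaves ≤ 2 ^ (max l.height r.height) :=
        ihl.trans (Nat.pow_le_pow_right (by norm_num) (le_max_left _ _))
      have h2 : r.numLeaves ≤ 2 ^ (max l.height r.height) :=
        ihr.trans (Nat.pow_le_pow_right (by norm_num) (le_max_right _ _))
      have : 2 ^ ((RTree.node l r).height) = 2 ^ (max l.height r.height) * 2 := by
        rw [height]; ring
      omega

lemma height_le_rdiam {L : Type} (T : RTree L) : T.height ≤ T.rdiam := by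
  induction T with
  | leaf b => simp [height, rdiam]
  | node l r ihl ihr =>
      have h1 : max l.height r.height + 1 ≤ l.height + r.height + 2 := by
        have : max l.height r.height ≤ l.height + r.height :=
          max_le (Nat.le_add_right _ _) (Nat.le_add_left _ _)
        omega
      calc (RTree.node l r).height = max l.height r.height + 1 := rfl
        _ ≤ l.height + r.height + 2 := h1
        _ ≤ (RTree.node l r).rdiam := le_max_right _ _

lemma pow_add_pow_le {h e : ℕ} (he : 1 ≤ e) : h ^ e + h ^ (e - 1) ≤ (h + 1) ^ e := by
  obtain ⟨e', rfl⟩ : ∃ e', e = e' + 1 := ⟨e - 1, by omega⟩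
  have h1 : (h + 1) * h ^ e' ≤ (h + 1) * (h + 1) ^ e' :=
    Nat.mul_le_mul_left _ (Nat.pow_le_pow_left (Nat.le_succ h) _)
  calc h ^ (e' + 1) + h ^ (e' + 1 - 1) = (h + 1) * h ^ e' := by
        simp [pow_succ]; ring
    _ ≤ (h + 1) * (h + 1) ^ e' := h1
    _ = (h + 1) ^ (e' + 1) := by rw [pow_succ]; ring

lemma exists_balanced {L : Type} (T : RTree L) :
    ∃ S : RTree L, Embeds S T ∧ IsBalanced S ∧
      T.numLeaves ≤ (T.height + 1) ^ S.height := by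
  induction T with
  | leaf b =>
      exact ⟨RTree.leaf b, Embeds.leaf b, trivial, by simp [numLeaves, leafList, height]⟩
  | node l r ihl ihr =>
      obtain ⟨S₁, hS₁e, hS₁b, hn₁⟩ := ihl
      obtain ⟨S₂, hS₂e, hS₂b, hn₂⟩ := ihr
      set H := max l.height r.height + 1 with hH
      have hHl : l.height + 1 ≤ H := by omega
      have hHr : r.height + 1 ≤ H := by omega
      have hn₁' : l.numLeaves ≤ H ^ S₁.height :=
        hn₁.trans (Nat.pow_le_pow_left hHl _)
      have hn₂' : r.numLeaves ≤ H ^ S₂.height :=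
        hn₂.trans (Nat.pow_le_pow_left hHr _)
      have hheight : (RTree.node l r).height = H := rfl
      have hnum := numLeaves_node l r
      rcases lt_trichotomy S₁.height S₂.height with hlt | heq | hgt
      · refine ⟨S₂, Embeds.right hS₂e, hS₂b, ?_⟩
        rw [hnum, hheight]
        have h1 : l.numLeaves ≤ H ^ (S₂.height - 1) :=
          hn₁'.trans (Nat.pow_le_pow_right (by omega) (by omega))
        have h2 := pow_add_pow_le (h := H) (e := S₂.height) (by omega)
        omega
      · refine ⟨RTree.node S₁ S₂, Embeds.pair hS₁e hS₂e, ⟨hS₁b, hS₂b, heq⟩, ?_⟩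
        rw [hnum, hheight]
        have hht : (RTree.node S₁ S₂).height = S₁.height + 1 := by
          simp [height, heq]
        rw [hht]
        have h2 : r.numLeaves ≤ H ^ S₁.height := by rw [heq]; exact hn₂'
        have h3 : (H + 1) ^ (S₁.height + 1) = (H + 1) * (H + 1) ^ S₁.height := by
          rw [pow_succ]; ring
        have h4 : H ^ S₁.height ≤ (H + 1) ^ S₁.height :=
          Nat.pow_le_pow_left (Nat.le_succ H) _
        have h5 : 2 ≤ H + 1 := by omega
        nlinarith [hn₁', h2, h4]
      · refine ⟨S₁, Embeds.left hS₁e, hS₁b, ?_⟩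
        rw [hnum, hheight]
        have h1 : r.numLeaves ≤ H ^ (S₁.height - 1) :=
          hn₂'.trans (Nat.pow_le_pow_right (by omega) (by omega))
        have h2 := pow_add_pow_le (h := H) (e := S₁.height) (by omega)
        omega

end RTree

/-- Let `a, b ∈ (0,1)` with `a + b = 1`, `φ(n,a) := (log n)^a / 2` and
`ψ(n,b) := (log n)^b / log log n`.  Every rooted binary tree with `n > 2` leaves
contains a path of length at least `(log n)^{ψ(n,b)}` or has a restriction that is a
balanced rooted binary tree of height at least `φ(n,a)` (logarithms base 2). -/
theorem stmt_8 (T : RTree ℕ) (hT : T.IsPhylo) (hn : 2 < T.numLeaves)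
    (a b : ℝ) (ha : a ∈ Set.Ioo (0 : ℝ) 1) (hb : b ∈ Set.Ioo (0 : ℝ) 1) (hab : a + b = 1) :
    (Real.logb 2 (T.numLeaves : ℝ)) ^
        ((Real.logb 2 (T.numLeaves : ℝ)) ^ b / Real.logb 2 (Real.logb 2 (T.numLeaves : ℝ)))
      ≤ (T.rdiam : ℝ) ∨
    ∃ S : RTree ℕ, RTree.Embeds S T ∧ S.IsBalanced ∧
      (Real.logb 2 (T.numLeaves : ℝ)) ^ a / 2 ≤ (S.height : ℝ) := by
  obtain ⟨ha0, ha1⟩ := ha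
  obtain ⟨hb0, hb1⟩ := hb
  set x := Real.logb 2 (T.numLeaves : ℝ) with hxdef
  have hn3 : (3 : ℝ) ≤ (T.numLeaves : ℝ) := by exact_mod_cast hn
  have hx1 : 1 < x := by
    have h2 : Real.logb 2 2 < Real.logb 2 (T.numLeaves : ℝ) :=
      Real.logb_lt_logb (by norm_num) (by norm_num) (by linarith)
    simpa [Real.logb_self_eq_one] using h2
  have hx0 : (0 : ℝ) < x := by linarith
  have hlx : 0 < Real.logb 2 x := Real.logb_pos (by norm_num) hx1
  set ψ := x ^ b / Real.logb 2 x with hψdef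
  set Lv := x ^ ψ with hLdef
  by_cases hcase : Lv ≤ (T.rdiam : ℝ)
  · exact Or.inl hcase
  · push_neg at hcase
    right
    obtain ⟨S, hSe, hSb, hbound⟩ := RTree.exists_balanced T
    refine ⟨S, hSe, hSb, ?_⟩
    -- basic size facts
    have hh2 : 2 ≤ T.height := by
      have := RTree.numLeaves_le_two_pow_height T
      by_contra h
      have hp : 2 ^ T.height ≤ 2 ^ 1 :=
        Nat.pow_le_pow_right (by norm_num) (by omega)
      simp only [pow_one] at hp
      omega
    have hr2 : 2 ≤ T.rdiam := hh2.trans (RTree.height_le_rdiam T)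
    have he1 : 1 ≤ S.height := by
      by_contra h
      have h0 : S.height = 0 := by omega
      rw [h0, pow_zero] at hbound
      omega
    -- real versions
    have hhr : (T.height : ℝ) ≤ (T.rdiam : ℝ) := by
      exact_mod_cast RTree.height_le_rdiam T
    have hr2' : (2 : ℝ) ≤ (T.rdiam : ℝ) := by exact_mod_cast hr2
    have hLpos : 0 < Lv := Real.rpow_pos_of_pos hx0 _
    -- h + 1 ≤ Lv^2
    have hhL : ((T.height : ℝ) + 1) ≤ Lv ^ 2 := by
      have h1 : ((T.height : ℝ) + 1) ≤ (T.rdiam : ℝ) ^ 2 := by nlinarith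
      have h2 : ((T.rdiam : ℝ)) ^ 2 ≤ Lv ^ 2 := by nlinarith
      linarith
    -- logb of Lv
    have hlogL : Real.logb 2 Lv = x ^ b := by
      have hlogx : Real.log x ≠ 0 := ne_of_gt (Real.log_pos hx1)
      have hlog2 : Real.log 2 ≠ 0 := ne_of_gt (Real.log_pos (by norm_num))
      rw [hLdef, Real.logb, Real.log_rpow hx0, hψdef, Real.logb]
      field_simp
    -- x ≤ S.height * logb 2 (h+1)
    have hlog1 : x ≤ (S.height : ℝ) * Real.logb 2 ((T.height : ℝ) + 1) := by
      have hb' : (T.numLeaves : ℝ) ≤ ((T.height : ℝ) + 1) ^ (S.height : ℕ) := by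
        exact_mod_cast hbound
      have hmono : Real.logb 2 (T.numLeaves : ℝ) ≤
          Real.logb 2 (((T.height : ℝ) + 1) ^ (S.height : ℕ)) :=
        Real.logb_le_logb_of_le (by norm_num) (by linarith) hb'
      rwa [Real.logb_pow] at hmono
    -- logb 2 (h+1) ≤ 2 * x^b
    have hlog2 : Real.logb 2 ((T.height : ℝ) + 1) ≤ 2 * x ^ b := by
      have hmono : Real.logb 2 ((T.height : ℝ) + 1) ≤ Real.logb 2 (Lv ^ 2) :=
        Real.logb_le_logb_of_le (by norm_num) (by positivity) hhL
      rw [Real.logb_pow, hlogL] at hmono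
      simpa using hmono
    have hxb0 : (0 : ℝ) < x ^ b := Real.rpow_pos_of_pos hx0 _
    have hkey : x ≤ (S.height : ℝ) * (2 * x ^ b) := by
      have hS0 : (0 : ℝ) ≤ (S.height : ℝ) := Nat.cast_nonneg _
      calc x ≤ (S.height : ℝ) * Real.logb 2 ((T.height : ℝ) + 1) := hlog1
        _ ≤ (S.height : ℝ) * (2 * x ^ b) := by
            apply mul_le_mul_of_nonneg_left hlog2 hS0
    have hsplit : x ^ a * x ^ b = x := by
      rw [← Real.rpow_add hx0, hab, Real.rpow_one]
    have hfin : x ^ a ≤ 2 * (S.height : ℝ) := by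
      have h1 : x ^ a * x ^ b ≤ (2 * (S.height : ℝ)) * x ^ b := by
        rw [hsplit]; nlinarith
      exact le_of_mul_le_mul_right h1 hxb0
    linarith
end

section
/- Let δ ∈ (0, 1/3 − 1/(3√2)) and set β := (1 + 2·log(1−3δ))/(log(1−3δ) − log δ). If m, a, b, c, d, e are nonnegative integers with a + b + c + d + e ≤ 2m and 2^m · δ^{a+b} · (1−3δ)^{c+d+e} ≤ 1, then a + b ≥ β·m. -/
/-- Let `δ ∈ (0, 1/3 - 1/(3√2))` and
`β := (1 + 2·log(1-3δ))/(log(1-3δ) - log δ)` (logs base 2).  If `m, a, b, c, d, e` are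
nonnegative integers with `a + b + c + d + e ≤ 2m` and
`2^m · δ^{a+b} · (1-3δ)^{c+d+e} ≤ 1`, then `a + b ≥ β·m`. -/
theorem stmt_19 (δ : ℝ) (hδ : δ ∈ Set.Ioo (0 : ℝ) (1/3 - 1/(3 * Real.sqrt 2)))
    (m a b c d e : ℕ) (hsum : a + b + c + d + e ≤ 2 * m)
    (hle : (2 : ℝ) ^ m * δ ^ (a + b) * (1 - 3 * δ) ^ (c + d + e) ≤ 1) :
    (1 + 2 * Real.logb 2 (1 - 3 * δ)) / (Real.logb 2 (1 - 3 * δ) - Real.logb 2 δ) * m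
      ≤ (a : ℝ) + b := by
  obtain ⟨hδ0, hδu⟩ := hδ
  have hs2 : (1 : ℝ) < Real.sqrt 2 := by
    nlinarith [Real.sq_sqrt (by norm_num : (2:ℝ) ≥ 0), Real.sqrt_nonneg 2]
  have hδ4 : δ < 1/4 := by
    have : 1/(3 * Real.sqrt 2) > 1/(3 * 2) := by
      apply one_div_lt_one_div_of_lt <;> nlinarith [Real.sq_sqrt (by norm_num : (2:ℝ) ≥ 0)]
    linarith
  have h13 : 0 < 1 - 3 * δ := by linarith
  have h13lt : 1 - 3 * δ < 1 := by linarith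
  have hδlt : δ < 1 - 3 * δ := by linarith
  set x := Real.logb 2 δ with hx
  set y := Real.logb 2 (1 - 3 * δ) with hy
  have hylt : y < 0 := Real.logb_neg (by norm_num) h13 h13lt
  have hxy : x < y := Real.logb_lt_logb (by norm_num) hδ0 hδlt
  -- take logs of hle
  have hpos : (0:ℝ) < (2 : ℝ) ^ m * δ ^ (a + b) * (1 - 3 * δ) ^ (c + d + e) := by
    positivity
  have hlog : Real.logb 2 ((2 : ℝ) ^ m * δ ^ (a + b) * (1 - 3 * δ) ^ (c + d + e)) ≤ 0 := by
    exact Real.logb_nonpos (by norm_num) hpos.le hle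
  have hexp : (m : ℝ) + (a + b : ℕ) * x + (c + d + e : ℕ) * y ≤ 0 := by
    rw [Real.logb_mul (by positivity) (by positivity),
        Real.logb_mul (by positivity) (by positivity),
        Real.logb_pow, Real.logb_pow, Real.logb_pow,
        Real.logb_self_eq_one (by norm_num)] at hlog
    push_cast at hlog ⊢
    linarith
  have hsumR : (a : ℝ) + b + c + d + e ≤ 2 * m := by exact_mod_cast hsum
  have key : (1 + 2 * y) * m ≤ ((a : ℝ) + b) * (y - x) := by
    push_cast at hexp
    nlinarith [mul_nonneg (by linarith : (0:ℝ) ≤ 2 * m - ((a:ℝ)+b+c+d+e)) (by linarith : (0:ℝ) ≤ -y)]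
  rw [div_mul_eq_mul_div, div_le_iff₀ (by linarith)]
  linarith
end
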